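/- Let G = (U, V, E) be a bipartite graph, F ⊆ E, and (E_r, E_b) an (A, B, C)-free bipartition of the committed edges E_c with F ∩ E_c ⊆ E_b. Then there are no alternating cycles of E_r relative to G − F. -/

import Mathlib

/-- Two edges (u1,v1), (u2,v2) are in conflict in the bipartite graph with
edge relation `E`: both are edges and both cross pairs are non-edges. -/
def Confl {U V : Type*} (E : U → V → Prop) (u1 : U) (v1 : V) (u2 : U) (v2 : V) : Prop :=
  E u1 v1 ∧ E u2 v2 ∧ ¬E u1 v2 ∧ ¬E u2 v1

/-- A bipartite graph (given by its edge relation) has no induced 2K2. -/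
def NoInduced2K2 {U V : Type*} (E : U → V → Prop) : Prop :=
  ¬ ∃ u1 u2 v1 v2, E u1 v1 ∧ E u2 v2 ∧ ¬E u1 v2 ∧ ¬E u2 v1

/-- An edge is committed if it is in conflict with another edge. -/
def Committed {U V : Type*} (E : U → V → Prop) (u : U) (v : V) : Prop :=
  ∃ u' v', Confl E u v u' v'

/-- An alternating cycle of `M` relative to the graph with edges `E`, of length `2k`. -/
def AltCycleK {U V : Type*} (E M : U → V → Prop) (k : ℕ) : Prop :=
  ∃ (u : ZMod k → U) (v : ZMod k → V), Function.Injective u ∧ Function.Injective v ∧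
    ∀ i : ZMod k, ¬E (u i) (v i) ∧ M (u (i + 1)) (v i)

/-- An alternating cycle of `M` relative to `E` (some length `2k`, `k ≥ 2`). -/
def AltCycle {U V : Type*} (E M : U → V → Prop) : Prop :=
  ∃ k : ℕ, 2 ≤ k ∧ AltCycleK E M k

/-- `(Er, Eb)` is a bipartition of the committed edges of `E`. -/
def Bipartition {U V : Type*} (E Er Eb : U → V → Prop) : Prop :=
  (∀ u v, Committed E u v ↔ (Er u v ∨ Eb u v)) ∧ ∀ u v, ¬(Er u v ∧ Eb u v)

/-- No configuration (A1): no two conflicting edges both in `Er`. -/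
def NoA1 {U V : Type*} (E Er : U → V → Prop) : Prop :=
  ¬ ∃ u1 u2 v1 v2, Er u1 v1 ∧ Er u2 v2 ∧ ¬E u1 v2 ∧ ¬E u2 v1

/-- No configuration (B1): no `u1v1, u2v2 ∈ Er`, `u2v1 ∈ Eb`, `u1v2 ∉ E`. -/
def NoB1 {U V : Type*} (E Er Eb : U → V → Prop) : Prop :=
  ¬ ∃ u1 u2 v1 v2, Er u1 v1 ∧ Er u2 v2 ∧ Eb u2 v1 ∧ ¬E u1 v2

/-- No configuration (C): no `u1v1, u2v2 ∈ Er`, `u1v2 ∉ E`, `u2v1 ∈ F`. -/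
def NoC {U V : Type*} (E F Er : U → V → Prop) : Prop :=
  ¬ ∃ u1 u2 v1 v2, Er u1 v1 ∧ Er u2 v2 ∧ ¬E u1 v2 ∧ F u2 v1

/-- `(Er, Eb)` is (A, C)-free. -/
def ACFree {U V : Type*} (E F Er Eb : U → V → Prop) : Prop :=
  NoA1 E Er ∧ NoA1 E Eb ∧ NoC E F Er

/-- `(Er, Eb)` is (A, B, C)-free. -/
def ABCFree {U V : Type*} (E F Er Eb : U → V → Prop) : Prop :=
  ACFree E F Er Eb ∧ NoB1 E Er Eb ∧ NoB1 E Eb Er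

/-- `(E1, E2)` is a 2-chain subgraph cover of the bipartite graph with edge set `E`. -/
def ChainCover {U V : Type*} (E E1 E2 : U → V → Prop) : Prop :=
  (∀ u v, E1 u v → E u v) ∧ (∀ u v, E2 u v → E u v) ∧
  (∀ u v, E u v ↔ E1 u v ∨ E2 u v) ∧ NoInduced2K2 E1 ∧ NoInduced2K2 E2

/-
A red edge `u_{i+1} v_i` of the cycle can be carried across a diagonal `u_i v_i ∈ F`:
by (A), (B₁) and (C), red `u_i v_{i-1}` and red `u_{i+1} v_i` force `u_{i+1} v_{i-1}` to be red.
Contracting all `F`-diagonals leaves a closed alternating walk of red edges whose diagonals are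
non-edges of `G` (there is at least one, since red edges avoid `F`). Along it the neighbourhoods in
the graph of red and uncommitted edges strictly increase, which is impossible around a cycle.
-/

section

variable {U V : Type*} {E F Er Eb : U → V → Prop} {a c : U} {b d p q : V}

theorem Confl.symm (h : Confl E a b c d) : Confl E c d a b :=
  ⟨h.2.1, h.1, h.2.2.2, h.2.2.1⟩

def RedOrUncommitted (E Er : U → V → Prop) (a : U) (b : V) : Prop :=
  Er a b ∨ (E a b ∧ ¬Committed E a b)

namespace Bipartition

theorem symm (h : Bipartition E Er Eb) : Bipartition E Eb Er :=
  ⟨fun a b => (h.1 a b).trans or_comm, fun a b hab => h.2 a b hab.symm⟩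

theorem committed_of_red (h : Bipartition E Er Eb) (hr : Er a b) : Committed E a b :=
  (h.1 a b).mpr (Or.inl hr)

theorem edge_of_red (h : Bipartition E Er Eb) (hr : Er a b) : E a b := by
  obtain ⟨_, _, hc⟩ := h.committed_of_red hr
  exact hc.1

theorem not_F_of_red (h : Bipartition E Er Eb) (hFb : ∀ u v, F u v → Committed E u v → Eb u v)
    (hr : Er a b) : ¬F a b :=
  fun hF => h.2 a b ⟨hr, hFb a b hF (h.committed_of_red hr)⟩

theorem blue_of_not_red (h : Bipartition E Er Eb) (hc : Committed E a b) (hr : ¬Er a b) :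
    Eb a b :=
  ((h.1 a b).mp hc).resolve_left hr

theorem red_of_confl_blue (h : Bipartition E Er Eb) (hA1b : NoA1 E Eb) (hc : Confl E a b c d)
    (hb : Eb c d) : Er a b :=
  ((h.1 a b).mp ⟨c, d, hc⟩).resolve_right
    fun hab => hA1b ⟨a, c, b, d, hab, hb, hc.2.2.1, hc.2.2.2⟩

theorem exists_confl_blue (h : Bipartition E Er Eb) (hA1r : NoA1 E Er) (hr : Er a b) :
    ∃ c d, Confl E a b c d ∧ Eb c d := by
  obtain ⟨c, d, hc⟩ := h.committed_of_red hr
  exact ⟨c, d, hc, h.symm.red_of_confl_blue hA1r hc.symm hr⟩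

theorem red_of_red_of_red_of_F (h : Bipartition E Er Eb) (hFE : ∀ u v, F u v → E u v)
    (hFb : ∀ u v, F u v → Committed E u v → Eb u v) (hA1r : NoA1 E Er) (hA1b : NoA1 E Eb)
    (hC : NoC E F Er) (hB1 : NoB1 E Er Eb) (hap : Er a p) (hcq : Er c q) (haq : F a q) :
    Er c p := by
  have hEaq : E a q := hFE a q haq
  have hEcp : E c p := by_contra fun hcp => hC ⟨c, a, q, p, hcq, hap, hcp, haq⟩
  -- `a q` would be blue as soon as it is committed
  have haq_free : ∀ w z, Eb w z → ¬Confl E a q w z := fun w z hb hc =>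
    hA1b ⟨a, w, q, z, hFb a q haq ⟨w, z, hc⟩, hb, hc.2.2.1, hc.2.2.2⟩
  obtain ⟨x, y, ⟨-, hxy, hay, hxp⟩, hbxy⟩ := h.exists_confl_blue hA1r hap
  obtain ⟨s, t, ⟨-, hst, hct, hsq⟩, hbst⟩ := h.exists_confl_blue hA1r hcq
  by_cases hsp : E s p
  swap
  · exact h.red_of_confl_blue hA1b ⟨hEcp, hst, hct, hsp⟩ hbst
  have hExq : E x q := by_contra fun hxq => haq_free x y hbxy ⟨hEaq, hxy, hay, hxq⟩
  have hbxq : Eb x q := h.blue_of_not_red ⟨s, p, hExq, hsp, hxp, hsq⟩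
    fun hxq => hC ⟨x, a, q, p, hxq, hap, hxp, haq⟩
  have hExt : E x t := by
    by_contra hxt
    have hEat : E a t := by_contra fun hat => haq_free s t hbst ⟨hEaq, hst, hat, hsq⟩
    exact hC ⟨c, a, q, t, hcq, h.red_of_confl_blue hA1b ⟨hEat, hxy, hay, hxt⟩ hbxy, hct, haq⟩
  have hbxt : Eb x t := h.blue_of_not_red ⟨c, p, hExt, hEcp, hxp, hct⟩
    fun hxt => hB1 ⟨c, x, q, t, hcq, hxt, hbxq, hct⟩
  exact h.red_of_confl_blue hA1b ⟨hEcp, hExt, hct, hxp⟩ hbxt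

theorem edge_of_redOrUncommitted (h : Bipartition E Er Eb) (hab : RedOrUncommitted E Er a b) :
    E a b :=
  hab.elim h.edge_of_red And.left

theorem redOrUncommitted_of_red (h : Bipartition E Er Eb) (hA1r : NoA1 E Er) (hA1b : NoA1 E Eb)
    (hB1 : NoB1 E Er Eb) (hab : RedOrUncommitted E Er a b) (hcd : Er c d) (had : ¬E a d) :
    RedOrUncommitted E Er c b := by
  have hEab : E a b := h.edge_of_redOrUncommitted hab
  have hred_ab : ∀ s t, Confl E a b s t → Er a b := fun s t hc =>
    hab.resolve_right fun hu => hu.2 ⟨s, t, hc⟩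
  by_contra hcb
  by_cases hEcb : E c b
  swap
  · exact hA1r ⟨a, c, b, d, hred_ab c d ⟨hEab, h.edge_of_red hcd, had, hEcb⟩, hcd, had, hEcb⟩
  have hbcb : Eb c b :=
    h.blue_of_not_red (by_contra fun hu => hcb (Or.inr ⟨hEcb, hu⟩)) fun hr => hcb (Or.inl hr)
  obtain ⟨s, t, ⟨-, hst, hct, hsb⟩, hrst⟩ := h.symm.exists_confl_blue hA1b hbcb
  have hEsd : E s d := by_contra fun hsd => hA1r ⟨c, s, d, t, hcd, hrst, hct, hsd⟩
  exact hB1 ⟨a, c, b, d, hred_ab s d ⟨hEab, hEsd, had, hsb⟩, hcd, hbcb, had⟩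

end Bipartition

theorem exists_nonedge_diag_adj {k : ℕ} [NeZero k] {M : U → V → Prop} {u : ZMod k → U}
    {v : ZMod k → V} (hcontract : ∀ a c p q, M a p → M c q → F a q → M c p)
    (hM : ∀ a b, M a b → E a b ∧ ¬F a b)
    (hcyc : ∀ i, ¬(E (u i) (v i) ∧ ¬F (u i) (v i)) ∧ M (u (i + 1)) (v i)) (i : ZMod k) :
    ∃ j, ¬E (u j) (v j) ∧ M (u j) (v i) := by
  have walk : ∀ n : ℕ, M (u (i + n + 1)) (v i) ∨ ∃ j, ¬E (u j) (v j) ∧ M (u j) (v i) := by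
    intro n
    induction n with
    | zero => simpa using Or.inl (hcyc i).2
    | succ n ih =>
      refine ih.elim (fun hn => ?_) Or.inr
      by_cases hE : E (u (i + n + 1)) (v (i + n + 1))
      · have hF : F (u (i + n + 1)) (v (i + n + 1)) :=
          by_contra fun hF => (hcyc _).1 ⟨hE, hF⟩
        left
        simpa [add_assoc] using hcontract _ _ _ _ hn (hcyc _).2 hF
      · exact Or.inr ⟨_, hE, hn⟩
  have hround : i + ((k - 1 : ℕ) : ZMod k) + 1 = i := by
    rw [Nat.cast_sub NeZero.one_le, ZMod.natCast_self]
    ring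
  refine (walk (k - 1)).resolve_left fun hi => ?_
  rw [hround] at hi
  exact (hcyc i).1 (hM _ _ hi)

end

/-- Given an (A, B, C)-free bipartition of the committed edges, there is no
alternating cycle of the red edges relative to `G - F`. -/
theorem stmt11 {U V : Type*} (E F Er Eb : U → V → Prop) (hFE : ∀ u v, F u v → E u v)
    (hpart : Bipartition E Er Eb) (habc : ABCFree E F Er Eb)
    (hFb : ∀ u v, F u v → Committed E u v → Eb u v) :
    ¬ AltCycle (fun u v => E u v ∧ ¬F u v) Er := by
  rintro ⟨k, hk, u, v, -, -, hcyc⟩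
  have : NeZero k := ⟨by omega⟩
  obtain ⟨⟨hA1r, hA1b, hC⟩, hB1, -⟩ := habc
  have reach := exists_nonedge_diag_adj (E := E) (F := F)
    (fun _ _ _ _ => hpart.red_of_red_of_red_of_F hFE hFb hA1r hA1b hC hB1)
    (fun _ _ hr => ⟨hpart.edge_of_red hr, hpart.not_F_of_red hFb hr⟩) hcyc
  set N : ZMod k → Set V := fun i => {b | RedOrUncommitted E Er (u i) b}
  obtain ⟨i₀, hi₀, -⟩ := reach 0
  obtain ⟨i, hi, hmax⟩ :=
    (Set.toFinite {i | ¬E (u i) (v i)}).exists_maximalFor N _ ⟨i₀, hi₀⟩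
  obtain ⟨j, hj, hji⟩ := reach i
  have hNij : N i ⊂ N j :=
    (Set.ssubset_iff_of_subset fun b hb =>
      hpart.redOrUncommitted_of_red hA1r hA1b hB1 hb hji hi).mpr
      ⟨v i, Or.inl hji, fun hvi => hi (hpart.edge_of_redOrUncommitted hvi)⟩
  exact hNij.not_subset (hmax hj hNij.subset)
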